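/- With a₀ = a, b₀ = b, a_{n+1} = [b_n^{-1}, a_n], b_{n+1} = [a_n, b_n] in F₂, one has ℓ(b_n) ≤ 3·ℓ(b_{n-1}) + 2·ℓ(b_{n-2}) for all n ≥ 2. -/

import Mathlib

open scoped commutatorElement

/-- `abPair n = (aₙ, bₙ)` with `a₀ = a`, `b₀ = b`, `a_{n+1} = [bₙ⁻¹, aₙ]`,
`b_{n+1} = [aₙ, bₙ]` in the free group on two generators. -/
def abPair : ℕ → FreeGroup (Fin 2) × FreeGroup (Fin 2)
  | 0 => (FreeGroup.of 0, FreeGroup.of 1)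
  | n + 1 => (⁅(abPair n).2⁻¹, (abPair n).1⁆, ⁅(abPair n).1, (abPair n).2⁆)

/-!
Write `aₙ = Aₙ Tₙ⁻¹` and `bₙ = Tₙ Bₙ` as words, with `Tₙ₊₁ = Aₙ`. Expanding the commutators and
cancelling `Tₙ⁻¹ Tₙ` gives `Aₙ₊₁ = Bₙ⁻¹ Tₙ⁻¹ Aₙ Bₙ Tₙ` and `Bₙ₊₁ = Bₙ Tₙ Aₙ⁻¹ Bₙ⁻¹ Tₙ⁻¹`. Every
junction between consecutive blocks in these words is one of the six junctions of the cyclic word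
`Bₙ⁻¹ Tₙ⁻¹ Aₙ Bₙ Tₙ Aₙ⁻¹` or the inverse of one, and the six junctions of the next cyclic word are
again of this kind. So if no cancellation occurs at these junctions for `n = 1`, none ever occurs,
all lengths add up, and `|Aₙ| = |Bₙ| = |Tₙ| + 2 ℓ(bₙ₋₁)` turns the recursion for `ℓ(bₙ) = |Tₙ| + |Bₙ|`
into `ℓ(bₙ₊₂) = 3 ℓ(bₙ₊₁) + 2 ℓ(bₙ)`.
-/

namespace FreeGroup

variable {α : Type*} {L M N : List (α × Bool)}

def ReducedJunction (L M : List (α × Bool)) : Prop :=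
  ∀ p ∈ L.getLast?, ∀ q ∈ M.head?, p.1 = q.1 → p.2 = q.2

theorem isReduced_append :
    IsReduced (L ++ M) ↔ IsReduced L ∧ IsReduced M ∧ ReducedJunction L M :=
  List.isChain_append

theorem invRev_eq_nil : invRev L = [] ↔ L = [] := by
  simp [invRev]

theorem IsReduced.invRev (h : IsReduced L) : IsReduced (invRev L) := by
  rw [FreeGroup.invRev, IsReduced, List.isChain_reverse, List.isChain_map]
  exact h.imp fun _ _ hpq heq => by simpa using (hpq heq.symm).symm

theorem reducedJunction_invRev_invRev :
    ReducedJunction (invRev L) (invRev M) ↔ ReducedJunction M L := by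
  simp only [ReducedJunction, invRev, List.getLast?_reverse, List.head?_reverse,
    List.head?_map, List.getLast?_map, Option.mem_def, Option.map_eq_some_iff]
  constructor
  · intro h p hp q hq heq
    simpa using (h _ ⟨q, hq, rfl⟩ _ ⟨p, hp, rfl⟩ heq.symm).symm
  · rintro h _ ⟨q, hq, rfl⟩ _ ⟨p, hp, rfl⟩ heq
    simpa using (h p hp q hq heq.symm).symm

theorem reducedJunction_append_left (hM : M ≠ []) :
    ReducedJunction (L ++ M) N ↔ ReducedJunction M N := by
  simp only [ReducedJunction, List.getLast?_append_of_ne_nil _ hM]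

theorem reducedJunction_append_right (hM : M ≠ []) :
    ReducedJunction L (M ++ N) ↔ ReducedJunction L M := by
  simp only [ReducedJunction, List.head?_append_of_ne_nil _ hM]

theorem norm_mk_of_isReduced [DecidableEq α] (h : IsReduced L) : norm (mk L) = L.length := by
  rw [norm, toWord_mk, h.reduce_eq]

end FreeGroup

namespace FreeGroup.CommutatorWords

variable {α : Type*} {T A B : List (α × Bool)}

def nextA (T A B : List (α × Bool)) : List (α × Bool) :=
  invRev B ++ invRev T ++ A ++ B ++ T

def nextB (T A B : List (α × Bool)) : List (α × Bool) :=
  B ++ T ++ invRev A ++ invRev B ++ invRev T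

theorem commutatorElement_inv_mk (T A B : List (α × Bool)) :
    ⁅(mk (T ++ B))⁻¹, mk (A ++ invRev T)⁆ = mk (nextA T A B ++ invRev A) := by
  simp only [nextA, commutatorElement_def, ← mul_mk, ← inv_mk]
  group

theorem commutatorElement_mk (T A B : List (α × Bool)) :
    ⁅mk (A ++ invRev T), mk (T ++ B)⁆ = mk (A ++ nextB T A B) := by
  simp only [nextB, commutatorElement_def, ← mul_mk, ← inv_mk]
  group

/-- The junctions of the cyclic word `B⁻¹ T⁻¹ A B T A⁻¹`, up to `invRev`, are reduced. -/
structure Admissible (T A B : List (α × Bool)) : Prop where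
  T_ne_nil : T ≠ []
  A_ne_nil : A ≠ []
  B_ne_nil : B ≠ []
  isReduced_T : IsReduced T
  isReduced_A : IsReduced A
  isReduced_B : IsReduced B
  T_B : ReducedJunction T B
  invRev_T_A : ReducedJunction (invRev T) A
  A_B : ReducedJunction A B
  B_T : ReducedJunction B T
  T_invRev_A : ReducedJunction T (invRev A)
  B_A : ReducedJunction B A

theorem Admissible.next (h : Admissible T A B) : Admissible A (nextA T A B) (nextB T A B) := by
  obtain ⟨hT, hA, hB, rT, rA, rB, jTB, jTA, jAB, jBT, jTA', jBA⟩ := h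
  have jAT : ReducedJunction A (invRev T) := by
    rwa [← reducedJunction_invRev_invRev, invRev_invRev]
  refine ⟨hA, by simp [nextA, hA], by simp [nextB, hB], rA, ?_, ?_, ?_, ?_, ?_, ?_, ?_, ?_⟩ <;>
  simp only [nextA, nextB, invRev_append, invRev_invRev, isReduced_append,
    reducedJunction_append_left, reducedJunction_append_right, reducedJunction_invRev_invRev,
    ne_eq, List.append_eq_nil_iff, invRev_eq_nil, and_false, not_false_eq_true, and_true,
    hT, hA, hB, rT, rA, rB, rT.invRev, rA.invRev, rB.invRev, jTB, jTA, jAB, jBT, jTA', jBA, jAT]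

theorem Admissible.norm_mk_append [DecidableEq α] (h : Admissible T A B) :
    (FreeGroup.mk (T ++ B)).norm = T.length + B.length := by
  rw [norm_mk_of_isReduced (isReduced_append.mpr ⟨h.isReduced_T, h.isReduced_B, h.T_B⟩),
    List.length_append]

end FreeGroup.CommutatorWords

open FreeGroup FreeGroup.CommutatorWords

theorem abPair_succ (n : ℕ) :
    abPair (n + 1) = (⁅(abPair n).2⁻¹, (abPair n).1⁆, ⁅(abPair n).1, (abPair n).2⁆) :=
  rfl

structure AbPairWords (n : ℕ) (T A B : List (Fin 2 × Bool)) : Prop where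
  admissible : Admissible T A B
  abPair_succ_eq : abPair (n + 1) = (mk (A ++ invRev T), mk (T ++ B))
  length_B : B.length = A.length
  length_A : A.length = T.length + 2 * (abPair n).2.norm

namespace AbPairWords

variable {n : ℕ} {T A B : List (Fin 2 × Bool)}

theorem zero : AbPairWords 0 [(0, true)] [(1, false), (0, true), (1, true)]
    [(1, true), (0, false), (1, false)] where
  admissible := by
    constructor <;> simp [FreeGroup.IsReduced, ReducedJunction, invRev]
  abPair_succ_eq := rfl
  length_B := rfl
  length_A := rfl

theorem norm_abPair_succ_snd (h : AbPairWords n T A B) :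
    (abPair (n + 1)).2.norm = T.length + B.length := by
  rw [h.abPair_succ_eq, h.admissible.norm_mk_append]

theorem succ (h : AbPairWords n T A B) : AbPairWords (n + 1) A (nextA T A B) (nextB T A B) where
  admissible := h.admissible.next
  abPair_succ_eq := by
    rw [abPair_succ, h.abPair_succ_eq, commutatorElement_inv_mk, commutatorElement_mk]
  length_B := by
    simp only [nextA, nextB, List.length_append, invRev_length]
  length_A := by
    rw [h.norm_abPair_succ_snd]
    simp only [nextA, List.length_append, invRev_length]
    omega

end AbPairWords

theorem exists_abPairWords (n : ℕ) : ∃ T A B, AbPairWords n T A B := by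
  induction n with
  | zero => exact ⟨_, _, _, .zero⟩
  | succ n ih =>
    obtain ⟨T, A, B, h⟩ := ih
    exact ⟨_, _, _, h.succ⟩

theorem norm_abPair_add_two_snd (n : ℕ) :
    (abPair (n + 2)).2.norm = 3 * (abPair (n + 1)).2.norm + 2 * (abPair n).2.norm := by
  obtain ⟨T, A, B, h⟩ := exists_abPairWords n
  rw [h.succ.norm_abPair_succ_snd, h.norm_abPair_succ_snd]
  simp only [nextB, List.length_append, invRev_length]
  linarith [h.length_A, h.length_B]

theorem abPair_norm_recursive_bound (n : ℕ) :
    (abPair (n + 2)).2.norm ≤ 3 * (abPair (n + 1)).2.norm + 2 * (abPair n).2.norm :=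
  (norm_abPair_add_two_snd n).le
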